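/- In the group 𝒜, for every f ∈ E and every j ∈ ℤ, the conjugation identities d_j^{-1} a_f d_j = a_{f_j^+} and d_j a_f d_j^{-1} = a_{f_j^-} hold. -/

import Mathlib

/-!
STATEMENT 8: In the group `𝒜` (given by 9 generators `a, b, c, t₁, t₁', u₁, u₂, d, e` and the
20 defining relations listed in the context), for every finitely supported `f : ℤ → ℤ` and
every `j ∈ ℤ` the conjugation identities
`d_j⁻¹ a_f d_j = a_{f_j⁺}` and `d_j a_f d_j⁻¹ = a_{f_j⁻}` hold,
where `b_i = c⁻ⁱ b cⁱ`, `d_i = e⁻ⁱ d eⁱ`, `b_f = ∏ b_i^{f(i)}` (increasing order of `i` over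
the support), `a_f = b_f⁻¹ a b_f`, and `f_j^±` agrees with `f` except at `j`, where its value
is `f(j) ± 1`.
-/

noncomputable section

/-- The free group on the 9 generators of `𝒜`. -/
abbrev F9 := FreeGroup (Fin 9)

def aF : F9 := FreeGroup.of 0
def bF : F9 := FreeGroup.of 1
def cF : F9 := FreeGroup.of 2
def t1F : F9 := FreeGroup.of 3
def t1F' : F9 := FreeGroup.of 4
def u1F : F9 := FreeGroup.of 5
def u2F : F9 := FreeGroup.of 6
def dF : F9 := FreeGroup.of 7
def eF : F9 := FreeGroup.of 8

/-- Conjugation `u^v = v⁻¹ u v`. -/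
def cj (u v : F9) : F9 := v⁻¹ * u * v

/-- The 20 defining relators of the group `𝒜`. -/
def relsA : Set F9 :=
  { cj bF t1F * bF⁻¹,
    cj bF t1F' * (cj bF cF⁻¹)⁻¹,
    cj cF t1F * (cF ^ 2)⁻¹,
    cj cF t1F' * (cF ^ 2)⁻¹,
    cj (cj bF cF) u1F * (cj bF cF)⁻¹,
    cj t1F u1F * t1F⁻¹,
    cj t1F' u1F * t1F'⁻¹,
    cj aF u2F * aF⁻¹,
    cj bF u2F * bF⁻¹,
    cj t1F u2F * t1F⁻¹,
    cj t1F' u2F * t1F'⁻¹,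
    cj (cj aF u1F) dF * (cj aF u1F)⁻¹,
    cj (cj bF u1F) dF * (cj bF u1F)⁻¹,
    cj (cj cF u1F) dF * (cj cF u1F)⁻¹,
    cj aF (u2F * dF) * (cj aF (bF * u2F))⁻¹,
    cj bF (u2F * dF) * (cj bF u2F)⁻¹,
    cj cF (u2F * dF) * (cj cF (bF * u2F))⁻¹,
    cj aF eF * aF⁻¹,
    cj bF eF * (cj bF cF)⁻¹,
    cj cF eF * cF⁻¹ }

/-- The group `𝒜`. -/
abbrev GroupA := PresentedGroup relsA

def aA : GroupA := PresentedGroup.of 0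
def bA : GroupA := PresentedGroup.of 1
def cA : GroupA := PresentedGroup.of 2
def dA : GroupA := PresentedGroup.of 7
def eA : GroupA := PresentedGroup.of 8

/-- `b_i = c⁻ⁱ b cⁱ` in `𝒜`. -/
def bIdx (i : ℤ) : GroupA := cA ^ (-i) * bA * cA ^ i

/-- `d_i = e⁻ⁱ d eⁱ` in `𝒜`. -/
def dIdx (i : ℤ) : GroupA := eA ^ (-i) * dA * eA ^ i

/-- `b_f = ∏ b_i^{f(i)}`, the product over the support of `f` in increasing order of `i`. -/
def bW (f : ℤ →₀ ℤ) : GroupA :=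
  ((f.support.sort (· ≤ ·)).map fun i => bIdx i ^ f i).prod

/-- `a_f = b_f⁻¹ a b_f`. -/
def aW (f : ℤ →₀ ℤ) : GroupA := (bW f)⁻¹ * aA * bW f

/-!
Conjugation by `d_j` fixes `b_i` for `i > j` and acts as conjugation by `b_j` on `a` and on `b_i`
for `i ≤ j`; then `b_j · b_f^{d_j} = b_{f_j^+}` because the factors left of `b_j^{f(j)}` are
carried across `b_j`, and `a_f^{d_j} = a^{b_j · b_f^{d_j}} = a_{f_j^+}`.
Conjugation by `e` fixes `a` and shifts `b_i ↦ b_{i+1}`, which reduces the action of `d_j` to that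
of `d = d_0`. Every `b_i` is reached from `b_1` (for `i ≥ 1`) or from `b_0 = b` (for `i ≤ 0`) by the
recursion `b_{2i} = b_i^{t₁}`, `b_{2i-1} = b_i^{t'₁}`, so `u₁` centralises `b_i` for `i ≥ 1` and
`u₂` centralises `b_i` for `i ≤ 0`. The relations for `d` then give `b_i^d = b_i` for `i ≥ 1` and
`x^d = x^b` for every `x ∈ ⟨a, b, c⟩` commuting with `u₂`, in particular for `a` and `b_i`, `i ≤ 0`.
-/

section RightConjugation

variable {G : Type*} [Group G]

/-- The paper's exponent notation `x ^ v = v⁻¹ x v`. -/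
def rconj (v : G) : G →* G := (MulAut.conj v⁻¹).toMonoidHom

theorem rconj_apply (v x : G) : rconj v x = v⁻¹ * x * v := by
  simp [rconj]

theorem rconj_mul (v w x : G) : rconj (v * w) x = rconj w (rconj v x) := by
  simp only [rconj_apply]
  group

theorem rconj_rconj (v x y : G) : rconj v (rconj x y) = rconj (rconj v x) (rconj v y) := by
  simp only [rconj_apply]
  group

theorem rconj_eq_self_iff {v x : G} : rconj v x = x ↔ Commute x v := by
  rw [rconj_apply, mul_assoc, inv_mul_eq_iff_eq_mul]
  rfl

theorem Commute.rconj_right {u v x : G} (hv : Commute u v) (hx : Commute u x) :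
    Commute u (rconj v x) := by
  rw [rconj_apply]
  exact (hv.inv_right.mul_right hx).mul_right hv

end RightConjugation

theorem Int.induction_binary_of_one_le {P : ℤ → Prop} (h1 : P 1)
    (hdouble : ∀ k, P k → P (2 * k)) (hpred : ∀ k, P k → P (2 * k - 1)) {i : ℤ} (hi : 1 ≤ i) :
    P i := by
  induction hn : i.natAbs using Nat.strong_induction_on generalizing i with
  | _ n ih =>
    obtain rfl | hi := eq_or_lt_of_le hi
    · exact h1
    obtain ⟨k, rfl | rfl⟩ : ∃ k, i = 2 * k ∨ i = 2 * k - 1 := ⟨(i + 1) / 2, by omega⟩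
    · exact hdouble k (ih _ (by omega) (by omega) rfl)
    · exact hpred k (ih _ (by omega) (by omega) rfl)

theorem Int.induction_binary_of_nonpos {P : ℤ → Prop} (h0 : P 0)
    (hdouble : ∀ k, P k → P (2 * k)) (hpred : ∀ k, P k → P (2 * k - 1)) {i : ℤ} (hi : i ≤ 0) :
    P i := by
  have := Int.induction_binary_of_one_le (P := fun i => P (1 - i)) (by simpa using h0)
    (fun k hk => by convert hpred (1 - k) hk using 1; ring)
    (fun k hk => by convert hdouble (1 - k) hk using 1; ring) (show 1 ≤ 1 - i by omega)
  simpa using this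

theorem List.prod_map_filter_eq_prod_map {α M : Type*} [Monoid M] (p : α → Bool) (F : α → M)
    {l : List α} (h : ∀ a ∈ l, p a = false → F a = 1) :
    ((l.filter p).map F).prod = (l.map F).prod := by
  induction l with
  | nil => rfl
  | cons a l ih =>
    rw [List.forall_mem_cons] at h
    cases ha : p a with
    | false => simp [ha, ih h.2, h.1 ha]
    | true => simp [ha, ih h.2]

theorem Finset.filter_sort {α : Type*} [LinearOrder α] (p : α → Prop) [DecidablePred p]
    (s : Finset α) : (s.sort (· ≤ ·)).filter p = (s.filter p).sort (· ≤ ·) :=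
  List.SortedLT.eq_of_mem_iff ((s.sortedLT_sort.pairwise.filter _).sortedLT)
    (Finset.sortedLT_sort _) (by simp)

theorem mul_map_prod_zpow_eq_prod_zpow_update {G : Type*} [Group G] (φ : G →* G) (β : ℤ → G)
    {j : ℤ} (hle : ∀ i ≤ j, φ (β i) = rconj (β j) (β i)) (hgt : ∀ i, j < i → φ (β i) = β i)
    (g : ℤ → ℤ) {L : List ℤ} (hL : L.Pairwise (· < ·)) (hj : j ∈ L) :
    β j * φ (L.map fun i => β i ^ g i).prod =
      (L.map fun i => β i ^ Function.update g j (g j + 1) i).prod := by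
  induction L with
  | nil => simp at hj
  | cons x T ih =>
    rw [List.pairwise_cons] at hL
    rcases lt_trichotomy x j with hxj | rfl | hxj
    · have hjT : j ∈ T := (List.mem_cons.mp hj).resolve_left hxj.ne'
      have hφx : φ (β x ^ g x) = rconj (β j) (β x ^ g x) := by
        rw [map_zpow, map_zpow, hle x hxj.le]
      simp only [List.map_cons, List.prod_cons, map_mul, Function.update_of_ne hxj.ne,
        ← ih hL.2 hjT, hφx, rconj_apply]
      group
    · have hφT : φ (T.map fun i => β i ^ g i).prod = (T.map fun i => β i ^ g i).prod := by
        rw [φ.map_list_prod, List.map_map]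
        exact congrArg List.prod (List.map_congr_left fun i hi => by
          simp [hgt i (hL.1 i hi)])
      have hupdT : (T.map fun i => β i ^ Function.update g x (g x + 1) i) =
          T.map fun i => β i ^ g i :=
        List.map_congr_left fun i hi => by rw [Function.update_of_ne (hL.1 i hi).ne']
      simp only [List.map_cons, List.prod_cons, map_mul, hφT, hupdT, Function.update_self,
        map_zpow, hle x le_rfl, rconj_eq_self_iff.mpr (Commute.refl _)]
      group
    · obtain rfl | hjT := List.mem_cons.mp hj
      · exact absurd hxj (lt_irrefl _)
      · exact absurd (hL.1 j hjT) (lt_asymm hxj)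

def t1A : GroupA := PresentedGroup.of 3
def t1A' : GroupA := PresentedGroup.of 4
def u1A : GroupA := PresentedGroup.of 5
def u2A : GroupA := PresentedGroup.of 6

section Relations

local notation "mk" => PresentedGroup.mk relsA

@[simp] theorem mk_aF : mk aF = aA := rfl
@[simp] theorem mk_bF : mk bF = bA := rfl
@[simp] theorem mk_cF : mk cF = cA := rfl
@[simp] theorem mk_t1F' : mk t1F' = t1A' := rfl
@[simp] theorem mk_u1F : mk u1F = u1A := rfl
@[simp] theorem mk_u2F : mk u2F = u2A := rfl
@[simp] theorem mk_dF : mk dF = dA := rfl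
@[simp] theorem mk_eF : mk eF = eA := rfl

@[simp] theorem mk_cj (u v : F9) : mk (cj u v) = rconj (mk v) (mk u) := by
  simp [cj, rconj_apply]

theorem rconj_of_mem_relsA {u v w : F9}
    (h : cj u v * w⁻¹ ∈ relsA := by
      simp only [relsA, Set.mem_insert_iff, Set.mem_singleton_iff, true_or, or_true]) :
    rconj (mk v) (mk u) = mk w := by
  rw [← mk_cj]
  exact PresentedGroup.mk_eq_mk_of_mul_inv_mem h

theorem commute_of_mem_relsA {u v : F9}
    (h : cj u v * u⁻¹ ∈ relsA := by
      simp only [relsA, Set.mem_insert_iff, Set.mem_singleton_iff, true_or, or_true]) :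
    Commute (mk v) (mk u) :=
  (rconj_eq_self_iff.mp (rconj_of_mem_relsA h)).symm

theorem rconj_t1_b : rconj t1A bA = bA :=
  rconj_of_mem_relsA (u := bF) (v := t1F) (w := bF)

theorem rconj_t1'_b : rconj t1A' bA = rconj cA⁻¹ bA := by
  simpa using rconj_of_mem_relsA (u := bF) (v := t1F') (w := cj bF cF⁻¹)

theorem rconj_t1_c : rconj t1A cA = cA ^ 2 :=
  (rconj_of_mem_relsA (u := cF) (v := t1F) (w := cF ^ 2)).trans (map_pow _ _ _)

theorem rconj_t1'_c : rconj t1A' cA = cA ^ 2 :=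
  (rconj_of_mem_relsA (u := cF) (v := t1F') (w := cF ^ 2)).trans (map_pow _ _ _)

theorem commute_u1_rconj_c_b : Commute u1A (rconj cA bA) := by
  simpa using commute_of_mem_relsA (u := cj bF cF) (v := u1F)

theorem commute_u1_t1 : Commute u1A t1A := commute_of_mem_relsA (u := t1F) (v := u1F)
theorem commute_u1_t1' : Commute u1A t1A' := commute_of_mem_relsA (u := t1F') (v := u1F)
theorem commute_u2_a : Commute u2A aA := commute_of_mem_relsA (u := aF) (v := u2F)
theorem commute_u2_b : Commute u2A bA := commute_of_mem_relsA (u := bF) (v := u2F)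
theorem commute_u2_t1 : Commute u2A t1A := commute_of_mem_relsA (u := t1F) (v := u2F)
theorem commute_u2_t1' : Commute u2A t1A' := commute_of_mem_relsA (u := t1F') (v := u2F)

theorem commute_d_rconj_u1_a : Commute dA (rconj u1A aA) := by
  simpa using commute_of_mem_relsA (u := cj aF u1F) (v := dF)

theorem commute_d_rconj_u1_b : Commute dA (rconj u1A bA) := by
  simpa using commute_of_mem_relsA (u := cj bF u1F) (v := dF)

theorem commute_d_rconj_u1_c : Commute dA (rconj u1A cA) := by
  simpa using commute_of_mem_relsA (u := cj cF u1F) (v := dF)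

theorem rconj_u2_d_a : rconj (u2A * dA) aA = rconj (bA * u2A) aA := by
  simpa using rconj_of_mem_relsA (u := aF) (v := u2F * dF) (w := cj aF (bF * u2F))

theorem rconj_u2_d_b : rconj (u2A * dA) bA = rconj u2A bA := by
  simpa using rconj_of_mem_relsA (u := bF) (v := u2F * dF) (w := cj bF u2F)

theorem rconj_u2_d_c : rconj (u2A * dA) cA = rconj (bA * u2A) cA := by
  simpa using rconj_of_mem_relsA (u := cF) (v := u2F * dF) (w := cj cF (bF * u2F))

theorem commute_e_a : Commute eA aA := commute_of_mem_relsA (u := aF) (v := eF)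

theorem rconj_e_b : rconj eA bA = rconj cA bA := by
  simpa using rconj_of_mem_relsA (u := bF) (v := eF) (w := cj bF cF)

theorem commute_e_c : Commute eA cA := commute_of_mem_relsA (u := cF) (v := eF)

end Relations

theorem bIdx_eq_rconj (i : ℤ) : bIdx i = rconj (cA ^ i) bA := by
  simp [bIdx, rconj_apply, zpow_neg]

theorem rconj_t1_bIdx (i : ℤ) : rconj t1A (bIdx i) = bIdx (2 * i) := by
  rw [bIdx_eq_rconj, rconj_rconj, rconj_t1_b, map_zpow, rconj_t1_c, ← zpow_natCast, ← zpow_mul,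
    bIdx_eq_rconj]
  norm_num

theorem rconj_t1'_bIdx (i : ℤ) : rconj t1A' (bIdx i) = bIdx (2 * i - 1) := by
  rw [bIdx_eq_rconj, rconj_rconj, rconj_t1'_b, map_zpow, rconj_t1'_c, ← rconj_mul,
    ← zpow_natCast, ← zpow_mul, ← zpow_neg_one, ← zpow_add, bIdx_eq_rconj,
    show -1 + ((2 : ℕ) : ℤ) * i = 2 * i - 1 by omega]

theorem commute_u1_bIdx {i : ℤ} (hi : 1 ≤ i) : Commute u1A (bIdx i) :=
  Int.induction_binary_of_one_le (P := fun i => Commute u1A (bIdx i))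
    (by rw [bIdx_eq_rconj, zpow_one]; exact commute_u1_rconj_c_b)
    (fun k hk => rconj_t1_bIdx k ▸ commute_u1_t1.rconj_right hk)
    (fun k hk => rconj_t1'_bIdx k ▸ commute_u1_t1'.rconj_right hk) hi

theorem commute_u2_bIdx {i : ℤ} (hi : i ≤ 0) : Commute u2A (bIdx i) :=
  Int.induction_binary_of_nonpos (P := fun i => Commute u2A (bIdx i))
    (by simpa [bIdx] using commute_u2_b)
    (fun k hk => rconj_t1_bIdx k ▸ commute_u2_t1.rconj_right hk)
    (fun k hk => rconj_t1'_bIdx k ▸ commute_u2_t1'.rconj_right hk) hi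

-- `b` commutes with `e c⁻¹`, and `e` commutes with `c`, so `e ^ j` acts on `b` as `c ^ j` does.
theorem rconj_epow_b (j : ℤ) : rconj (eA ^ j) bA = bIdx j := by
  have hb : Commute bA (eA * cA⁻¹) := by
    rw [← rconj_eq_self_iff, rconj_mul, rconj_e_b, ← rconj_mul, mul_inv_cancel, rconj_eq_self_iff]
    exact Commute.one_right _
  rw [show eA ^ j = (eA * cA⁻¹) ^ j * cA ^ j by
      rw [(commute_e_c.inv_right).mul_zpow, inv_zpow, inv_mul_cancel_right],
    rconj_mul, rconj_eq_self_iff.mpr (hb.zpow_right j), bIdx_eq_rconj]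

theorem rconj_epow_bIdx (j i : ℤ) : rconj (eA ^ j) (bIdx i) = bIdx (i + j) := by
  rw [bIdx_eq_rconj, rconj_rconj, rconj_epow_b,
    rconj_eq_self_iff.mpr ((commute_e_c.zpow_right i).zpow_left j).symm, bIdx_eq_rconj,
    ← rconj_mul, ← zpow_add, add_comm, bIdx_eq_rconj]

theorem rconj_epow_a (j : ℤ) : rconj (eA ^ j) aA = aA :=
  rconj_eq_self_iff.mpr (commute_e_a.zpow_left j).symm

def abcSubgroup : Subgroup GroupA := Subgroup.closure {aA, bA, cA}

theorem bIdx_mem_abcSubgroup (i : ℤ) : bIdx i ∈ abcSubgroup := by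
  have hb : bA ∈ abcSubgroup := Subgroup.subset_closure (by simp)
  have hc : cA ∈ abcSubgroup := Subgroup.subset_closure (by simp)
  exact mul_mem (mul_mem (zpow_mem hc _) hb) (zpow_mem hc _)

theorem aA_mem_abcSubgroup : aA ∈ abcSubgroup := Subgroup.subset_closure (by simp)

theorem commute_d_rconj_u1 {x : GroupA} (hx : x ∈ abcSubgroup) : Commute dA (rconj u1A x) := by
  have h : Set.EqOn ((rconj dA).comp (rconj u1A)) (rconj u1A) abcSubgroup :=
    MonoidHom.eqOn_closure <| by
      rintro _ (rfl | rfl | rfl) <;> rw [MonoidHom.comp_apply, rconj_eq_self_iff]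
      exacts [commute_d_rconj_u1_a.symm, commute_d_rconj_u1_b.symm, commute_d_rconj_u1_c.symm]
  exact (rconj_eq_self_iff.mp (h hx)).symm

theorem rconj_u2_d {x : GroupA} (hx : x ∈ abcSubgroup) :
    rconj (u2A * dA) x = rconj (bA * u2A) x := by
  refine MonoidHom.eqOn_closure ?_ hx
  rintro _ (rfl | rfl | rfl)
  exacts [rconj_u2_d_a, rconj_u2_d_b.trans (by rw [rconj_mul, rconj_eq_self_iff.mpr (.refl _)]),
    rconj_u2_d_c]

theorem rconj_d_of_commute_u2 {x : GroupA} (hx : x ∈ abcSubgroup) (hu : Commute u2A x) :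
    rconj dA x = rconj bA x := by
  have h := rconj_u2_d hx
  rw [rconj_mul, rconj_mul, rconj_eq_self_iff.mpr hu.symm] at h
  rw [h, rconj_eq_self_iff]
  exact (commute_u2_b.rconj_right hu).symm

theorem rconj_d_a : rconj dA aA = rconj bA aA :=
  rconj_d_of_commute_u2 aA_mem_abcSubgroup commute_u2_a

theorem rconj_d_bIdx_of_pos {i : ℤ} (hi : 1 ≤ i) : rconj dA (bIdx i) = bIdx i := by
  have h := commute_d_rconj_u1 (bIdx_mem_abcSubgroup i)
  rw [rconj_eq_self_iff.mpr (commute_u1_bIdx hi).symm] at h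
  exact rconj_eq_self_iff.mpr h.symm

theorem rconj_d_bIdx_of_nonpos {i : ℤ} (hi : i ≤ 0) : rconj dA (bIdx i) = rconj bA (bIdx i) :=
  rconj_d_of_commute_u2 (bIdx_mem_abcSubgroup i) (commute_u2_bIdx hi)

theorem rconj_dIdx (j : ℤ) (x : GroupA) :
    rconj (dIdx j) x = rconj (eA ^ j) (rconj dA (rconj (eA ^ (-j)) x)) := by
  rw [dIdx, rconj_mul, rconj_mul]

theorem rconj_dIdx_a (j : ℤ) : rconj (dIdx j) aA = rconj (bIdx j) aA := by
  rw [rconj_dIdx, rconj_epow_a, rconj_d_a, rconj_rconj, rconj_epow_a, rconj_epow_b]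

theorem rconj_dIdx_bIdx_of_le {i j : ℤ} (h : i ≤ j) :
    rconj (dIdx j) (bIdx i) = rconj (bIdx j) (bIdx i) := by
  rw [rconj_dIdx, rconj_epow_bIdx, rconj_d_bIdx_of_nonpos (by omega), rconj_rconj, rconj_epow_b,
    rconj_epow_bIdx, neg_add_cancel_right]

theorem rconj_dIdx_bIdx_of_lt {i j : ℤ} (h : j < i) : rconj (dIdx j) (bIdx i) = bIdx i := by
  rw [rconj_dIdx, rconj_epow_bIdx, rconj_d_bIdx_of_pos (by omega), rconj_epow_bIdx,
    neg_add_cancel_right]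

theorem bW_eq_prod_sort {f : ℤ →₀ ℤ} {s : Finset ℤ} (hs : f.support ⊆ s) :
    bW f = ((s.sort (· ≤ ·)).map fun i => bIdx i ^ f i).prod := by
  have hsupp : f.support = s.filter (f · ≠ 0) := by
    ext i
    simpa using fun hi => hs (Finsupp.mem_support_iff.mpr hi)
  rw [bW, hsupp, ← Finset.filter_sort, List.prod_map_filter_eq_prod_map]
  intro i _ hi
  simp only [decide_eq_false_iff_not, not_not] at hi
  rw [hi, zpow_zero]

theorem bIdx_mul_rconj_dIdx_bW (f : ℤ →₀ ℤ) (j : ℤ) :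
    bIdx j * rconj (dIdx j) (bW f) = bW (f + Finsupp.single j 1) := by
  set s := insert j (f.support ∪ (f + Finsupp.single j 1).support)
  have hupdate : ((f + Finsupp.single j 1 : ℤ →₀ ℤ) : ℤ → ℤ) = Function.update f j (f j + 1) := by
    ext i
    rcases eq_or_ne i j with rfl | h <;> simp [*]
  rw [bW_eq_prod_sort (s := s) (by intro i; simp +contextual [s]),
    bW_eq_prod_sort (s := s) (by intro i; simp +contextual [s]), hupdate]
  exact mul_map_prod_zpow_eq_prod_zpow_update (rconj (dIdx j)) bIdx
    (fun _ => rconj_dIdx_bIdx_of_le) (fun _ => rconj_dIdx_bIdx_of_lt) f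
    s.sortedLT_sort.pairwise (by simp [s])

/-- In `𝒜`: `d_j⁻¹ a_f d_j = a_{f_j⁺}` and `d_j a_f d_j⁻¹ = a_{f_j⁻}` for all `f ∈ E`, `j ∈ ℤ`. -/
theorem stmt8 (f : ℤ →₀ ℤ) (j : ℤ) :
    (dIdx j)⁻¹ * aW f * dIdx j = aW (f + Finsupp.single j 1) ∧
    dIdx j * aW f * (dIdx j)⁻¹ = aW (f + Finsupp.single j (-1)) := by
  have hconj (g : ℤ →₀ ℤ) : (dIdx j)⁻¹ * aW g * dIdx j = aW (g + Finsupp.single j 1) :=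
    calc (dIdx j)⁻¹ * aW g * dIdx j = rconj (dIdx j) (rconj (bW g) aA) := by
          rw [rconj_apply, rconj_apply, aW]
      _ = rconj (bIdx j * rconj (dIdx j) (bW g)) aA := by
          rw [rconj_rconj, rconj_dIdx_a, rconj_mul]
      _ = aW (g + Finsupp.single j 1) := by
          rw [bIdx_mul_rconj_dIdx_bW, rconj_apply, aW]
  refine ⟨hconj f, ?_⟩
  have h := hconj (f + Finsupp.single j (-1))
  rw [add_assoc, ← Finsupp.single_add, neg_add_cancel, Finsupp.single_zero, add_zero] at h
  rw [← h]
  group
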